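/- arXiv:1503.09081 — 5 statements merged into one kernel-verified Lean document; each statement's English description precedes it below -/
import Mathlib

section
/- Let A be a commutative ring with involution, E a finite poset, and P, Q, R, R̃ : E × E → A unitriangular matrices with PQ = QP = 1, P̄ = R̄P, R̄R = 1, and R̄ = S R̃ S, where S is the diagonal matrix with entries sgn(y) = (−1)^{ℓ(y)} for some function ℓ : E → ℤ. Define Q'(y,w) = sgn(y)sgn(w)Q(y,w). Then Q̄' = Q' R̃̄, i.e. for all y ≤ w: Q'(y,w)‾ = Σ_{z : y ≤ z ≤ w} Q'(y,z) · R̃(z,w)‾. -/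
open Classical

/-- Proposition 3.8 in matrix form. With `S` the diagonal sign matrix with entries
`(−1)^{ℓ(y)}`, `Q'(y,w) = sgn(y)sgn(w)Q(y,w)`, and hypotheses `PQ = QP = 1`,
`P̄ = R̄P`, `R̄R = 1`, `R̄ = S R̃ S`, we have `Q̄' = Q' R̃̄`, i.e. for all `y ≤ w`:
`bar (Q'(y,w)) = Σ_{y ≤ z ≤ w} Q'(y,z) * bar (R̃(z,w))`. -/
theorem stmt_9 {E : Type*} [Fintype E] [PartialOrder E] [DecidableEq E]
    {A : Type*} [CommRing A]
    (bar : A →+* A) (hbar : ∀ a : A, bar (bar a) = a)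
    (ℓ : E → ℤ)
    (P Q R Rt : Matrix E E A)
    (hPtri : ∀ y w : E, ¬ y ≤ w → P y w = 0) (hPdiag : ∀ w : E, P w w = 1)
    (hQtri : ∀ y w : E, ¬ y ≤ w → Q y w = 0) (hQdiag : ∀ w : E, Q w w = 1)
    (hRtri : ∀ y w : E, ¬ y ≤ w → R y w = 0) (hRdiag : ∀ w : E, R w w = 1)
    (hRttri : ∀ y w : E, ¬ y ≤ w → Rt y w = 0) (hRtdiag : ∀ w : E, Rt w w = 1)
    (hPQ : P * Q = 1) (hQP : Q * P = 1)
    (hPbar : P.map bar = R.map bar * P)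
    (hRR : R.map bar * R = 1)
    (sgn : E → A) (hsgn : ∀ y : E, sgn y = if Even (ℓ y) then 1 else -1)
    (hRS : R.map bar = Matrix.diagonal sgn * Rt * Matrix.diagonal sgn)
    (Q' : Matrix E E A) (hQ' : ∀ y w : E, Q' y w = sgn y * sgn w * Q y w) :
    (Q'.map bar = Q' * Rt.map bar) ∧
    ∀ y w : E, y ≤ w →
      bar (Q' y w) =
        ∑ z ∈ Finset.univ.filter (fun z : E => y ≤ z ∧ z ≤ w), Q' y z * bar (Rt z w) := by
  set S : Matrix E E A := Matrix.diagonal sgn with hS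
  have hsgn2 : ∀ y, sgn y * sgn y = 1 := by
    intro y; rw [hsgn]; split_ifs <;> ring
  have hbarsgn : ∀ y, bar (sgn y) = sgn y := by
    intro y; rw [hsgn]; split_ifs <;> simp
  have hSbar : S.map bar = S := by
    ext y w
    by_cases h : y = w <;>
      simp [hS, Matrix.map_apply, Matrix.diagonal_apply, h, hbarsgn]
  have hSS : S * S = 1 := by
    rw [hS, Matrix.diagonal_mul_diagonal]
    ext y w
    by_cases h : y = w <;> simp [Matrix.diagonal_apply, h, hsgn2, Matrix.one_apply]
  have hQ'SQS : Q' = S * Q * S := by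
    ext y w
    rw [Matrix.mul_diagonal, Matrix.diagonal_mul, hQ']
    ring
  -- Q.map bar = Q * R
  have h1 : Q.map bar * P.map bar = 1 := by
    rw [← Matrix.map_mul, hQP, Matrix.map_one bar (map_zero bar) (map_one bar)]
  have h2 : Q.map bar * R.map bar = Q := by
    have := congrArg (· * Q) h1
    simp only [hPbar, one_mul] at this
    calc Q.map bar * R.map bar = Q.map bar * R.map bar * (P * Q) := by rw [hPQ, mul_one]
      _ = Q.map bar * (R.map bar * P) * Q := by simp only [mul_assoc]
      _ = Q := by rw [this]
  have hQbar : Q.map bar = Q * R := by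
    calc Q.map bar = Q.map bar * (R.map bar * R) := by rw [hRR, mul_one]
      _ = Q.map bar * R.map bar * R := by rw [mul_assoc]
      _ = Q * R := by rw [h2]
  -- Rt = S * R.map bar * S, hence Rt.map bar = S * R * S
  have hRt : Rt = S * R.map bar * S := by
    rw [hRS]
    calc Rt = S * S * Rt * (S * S) := by rw [hSS]; simp
      _ = S * (S * Rt * S) * S := by simp only [mul_assoc]
  have hRmapmap : (R.map bar).map bar = R := by
    ext y w; simp [Matrix.map_apply, hbar]
  have hRtbar : Rt.map bar = S * R * S := by
    rw [hRt, Matrix.map_mul, Matrix.map_mul, hSbar, hRmapmap]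
  have hmain : Q'.map bar = Q' * Rt.map bar := by
    rw [hQ'SQS, Matrix.map_mul, Matrix.map_mul, hSbar, hQbar, hRtbar]
    calc S * (Q * R) * S = S * Q * (S * S) * R * S := by rw [hSS]; simp only [mul_one, mul_assoc]
      _ = S * Q * S * (S * R * S) := by simp only [mul_assoc]
  refine ⟨hmain, fun y w _ => ?_⟩
  have := congrFun (congrFun hmain y) w
  rw [Matrix.map_apply] at this
  rw [this, Matrix.mul_apply, Finset.sum_filter]
  apply Finset.sum_congr rfl
  intro z _
  split_ifs with h
  · rfl
  · rcases not_and_or.mp h with h' | h'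
    · rw [hQ' y z, hQtri y z h', mul_zero, zero_mul]
    · rw [Matrix.map_apply, hRttri z w h', map_zero, mul_zero]
end

section
/- Let E_J be a W-graph ideal with modules M(E_J,L) and M̃(E_J,L) and duality map η : M → M̃ determined by η(Γ₁) = Γ̃₁ and η(hΓ) = Φ(h)η(Γ). Then η(Γ_w) = ε_w Γ̃_w‾ for all w ∈ E_J, η is bijective, η commutes with the bar involutions, and its inverse θ satisfies θ(Γ̃₁) = Γ₁ and θ(hΓ̃) = Φ(h)θ(Γ̃). -/
/-- The (strong) Bruhat order on a Coxeter group. -/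
def bruhatLE {B W : Type*} [Group W] {M : CoxeterMatrix B} (cs : CoxeterSystem M W) :
    W → W → Prop :=
  Relation.ReflTransGen fun x y =>
    ∃ t, cs.IsReflection t ∧ y = t * x ∧ cs.length x < cs.length y

/-- The set of minimal length left coset representatives of `W / W_J`. -/
def DJset {B W : Type*} [Group W] {M : CoxeterMatrix B} (cs : CoxeterSystem M W)
    (J : Set B) : Set W :=
  {w | ∀ j ∈ J, cs.length w < cs.length (w * cs.simple j)}

/-!
Every `Γ_w` equals `T_w Γ₁` (induction on `ℓ(w)` with the `E⁺` rule and the ideal property of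
`E`), so `Γ₁` generates `M(E_J,L)` as an `H`-module, and `Γ̃₁` generates `M̃(E_J,L)`. An additive
map `F` with `F(hm) = ψ(h) F(m)` is therefore determined by `F(Γ₁)`. This gives the uniqueness
of `η`, the identity `η ∘ bar = bar ∘ η` (both sides are twisted by `h ↦ Φ(h̄)`, since `Φ`
commutes with the bar involution of `H`), and the involutivity of the bar maps.

For existence, define `η` on the basis by `η(Γ_w) = ε_w bar(Γ̃_w)`. Applying bar and the signs
`ε` to the action rules of `M` gives those of `M̃` (this is where `q̄_s = q'_s` and `r̃ = ε ε r̄`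
enter), so case by case `η(T_s Γ_w) = -ε_w bar(T_s Γ̃_w) = Φ(T_s) η(Γ_w)`, and the `T_s`
generate `H` as an algebra. Finally `θ(Γ̃_w) = ε_w bar(Γ_w)` satisfies `η ∘ θ = id`, and `θ` is
onto because the bar map of `M` is a bijective semilinear map; hence `θ = η⁻¹`, and `Φ² = id`
makes `θ` equivariant.
-/

theorem exists_smul_eq_of_basis {ι A H M : Type*} [CommRing A] [Ring H] [Algebra A H]
    [AddCommGroup M] [Module A M] [Module H M] [IsScalarTower A H M] (b : Module.Basis ι A M)
    {t : ι → H} {m₀ : M} (hb : ∀ i, b i = t i • m₀) (m : M) : ∃ h : H, h • m₀ = m := by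
  have hle : Submodule.span A (Set.range b) ≤
      LinearMap.range ((LinearMap.id : H →ₗ[A] H).smulRight m₀) := by
    rw [Submodule.span_le]
    rintro _ ⟨i, rfl⟩
    exact ⟨t i, (hb i).symm⟩
  rw [b.span_eq] at hle
  exact hle Submodule.mem_top

section Generator

variable {H H' M N : Type*} [SMul H M] {m₀ : M}

theorem eq_of_map_smul_eq_of_generator [SMul H' N] (hgen : ∀ m : M, ∃ h : H, h • m₀ = m)
    {ψ : H → H'} {F G : M → N} (hF : ∀ h m, F (h • m) = ψ h • F m)
    (hG : ∀ h m, G (h • m) = ψ h • G m) (h₀ : F m₀ = G m₀) : F = G := by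
  funext m
  obtain ⟨h, rfl⟩ := hgen m
  rw [hF, hG, h₀]

theorem involutive_of_map_smul_of_generator (hgen : ∀ m : M, ∃ h : H, h • m₀ = m)
    {barH : H → H} (hbarHinv : ∀ h : H, barH (barH h) = h) {barM : M → M}
    (hbarM : ∀ (h : H) (m : M), barM (h • m) = barH h • barM m) (hbarM₀ : barM m₀ = m₀) :
    Function.Involutive barM :=
  congrFun (eq_of_map_smul_eq_of_generator hgen (ψ := id) (G := id)
    (fun h m => by rw [hbarM, hbarM, hbarHinv]; rfl) (fun _ _ => rfl)
    (by rw [hbarM₀, hbarM₀]; rfl))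

theorem map_bar_eq_bar_map_of_generator [SMul H N] (hgen : ∀ m : M, ∃ h : H, h • m₀ = m)
    {Φ barH : H → H} (hΦ : ∀ h, Φ (barH h) = barH (Φ h)) {η : M → N}
    (hη : ∀ h m, η (h • m) = Φ h • η m) {barM : M → M} {barN : N → N}
    (hbarM : ∀ h m, barM (h • m) = barH h • barM m) (hbarN : ∀ h n, barN (h • n) = barH h • barN n)
    (h₀ : η (barM m₀) = barN (η m₀)) (m : M) : η (barM m) = barN (η m) :=
  congrFun (eq_of_map_smul_eq_of_generator hgen (ψ := fun h => Φ (barH h))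
    (F := fun m => η (barM m)) (G := fun m => barN (η m))
    (fun h m => by rw [hbarM, hη]) (fun h m => by rw [hη, hbarN, hΦ]) h₀) m

end Generator

theorem LinearMap.map_smul_eq_of_adjoin_eq_top {ι A H H' M N : Type*} [CommRing A] [Ring H]
    [Algebra A H] [Ring H'] [Algebra A H'] [AddCommGroup M] [Module A M] [Module H M]
    [IsScalarTower A H M] [AddCommGroup N] [Module A N] [Module H' N] [IsScalarTower A H' N]
    (b : Module.Basis ι A M) {S : Set H} (hS : Algebra.adjoin A S = ⊤) (f : M →ₗ[A] N)
    (φ : H →ₐ[A] H') (hf : ∀ s ∈ S, ∀ i, f (s • b i) = φ s • f (b i)) (h : H) (m : M) :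
    f (h • m) = φ h • f m := by
  have hh : h ∈ Algebra.adjoin A S := hS ▸ Algebra.mem_top
  induction hh using Algebra.adjoin_induction generalizing m with
  | mem s hs =>
    exact LinearMap.congr_fun (b.ext (f₁ := f ∘ₗ Algebra.lsmul A A M s)
      (f₂ := Algebra.lsmul A A N (φ s) ∘ₗ f) (hf s hs)) m
  | algebraMap a => simp only [algebraMap_smul, map_smul, AlgHom.commutes]
  | add x y _ _ hx hy => simp only [add_smul, map_add, hx, hy]
  | mul x y _ _ hx hy => simp only [mul_smul, map_mul, hx, hy]

section Bar

variable {A H : Type*} [CommRing A] [Ring H] [Algebra A H] {σ : A →+* A} {barH : H → H}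

theorem bar_algebraMap (hbarHmul : ∀ h h' : H, barH (h * h') = barH h * barH h')
    (hbarHsemi : ∀ (a : A) (h : H), barH (a • h) = σ a • barH h)
    (hbarHinv : ∀ h : H, barH (barH h) = h) (a : A) :
    barH (algebraMap A H a) = algebraMap A H (σ a) := by
  have hone : barH 1 = 1 := by simpa [hbarHinv] using (hbarHmul (barH 1) 1).symm
  rw [Algebra.algebraMap_eq_smul_one, hbarHsemi, hone, Algebra.algebraMap_eq_smul_one]

theorem map_smul_of_map_hsmul {M : Type*} [AddCommGroup M] [Module A M] [Module H M]
    [IsScalarTower A H M] (hbarH : ∀ a, barH (algebraMap A H a) = algebraMap A H (σ a))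
    {barM : M → M} (hbarM : ∀ (h : H) (m : M), barM (h • m) = barH h • barM m) (a : A) (m : M) :
    barM (a • m) = σ a • barM m := by
  rw [← algebraMap_smul H a m, hbarM, hbarH, algebraMap_smul]

end Bar

section Twisted

variable {ι A M N : Type*} [CommRing A] [AddCommGroup M] [Module A M] [AddCommGroup N]
  [Module A N] {σ : A →+* A}

theorem map_finsuppSum_twisted (hσ : ∀ a, σ (σ a) = a) (β : N →ₛₗ[σ] N) (η : M →ₗ[A] N)
    {Γ : ι → M} {Γt : ι → N} {n : ι → ℕ} (hη : ∀ z, η (Γ z) = (-1 : A) ^ n z • β (Γt z))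
    (r rt : ι →₀ A) {k : ℕ} (hrt : ∀ z, rt z = (-1 : A) ^ (n z + k) * σ (r z)) :
    η (r.sum fun z a => a • Γ z) = (-1 : A) ^ k • β (rt.sum fun z a => a • Γt z) := by
  have hsupp : rt.support = r.support := by
    ext z
    rw [Finsupp.mem_support_iff, Finsupp.mem_support_iff, hrt,
      (isUnit_one.neg.pow _).mul_right_eq_zero.ne]
    exact map_ne_zero_iff σ (Function.LeftInverse.injective hσ)
  rw [Finsupp.sum, Finsupp.sum, hsupp, map_sum, map_sum, Finset.smul_sum]
  refine Finset.sum_congr rfl fun z _ => ?_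
  rw [map_smul, hη, map_smulₛₗ, hrt, smul_smul, smul_smul, map_mul, hσ, map_pow, map_neg,
    map_one, ← mul_assoc, ← pow_add, add_left_comm, pow_add, Even.neg_one_pow ⟨k, rfl⟩, mul_one,
    mul_comm]

theorem exists_inverse_of_twisted [RingHomSurjective σ] (bM : Module.Basis ι A M)
    (bN : Module.Basis ι A N) (α : M →ₛₗ[σ] M) (hα : Function.Involutive α)
    (β : N →ₛₗ[σ] N) (hβ : Function.Involutive β) (η : M →ₗ[A] N) (n : ι → ℕ)
    (hη : ∀ i, η (bM i) = (-1 : A) ^ n i • β (bN i)) (hηα : ∀ m, η (α m) = β (η m)) :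
    ∃ θ : N →ₗ[A] M, Function.LeftInverse θ η ∧ Function.RightInverse θ η := by
  set θ := bN.constr A fun i => (-1 : A) ^ n i • α (bM i)
  have hθ : ∀ i, θ (bN i) = (-1 : A) ^ n i • α (bM i) := bN.constr_basis A _
  have hηθ : ∀ m, η (θ m) = m := by
    refine LinearMap.congr_fun (bN.ext (f₁ := η ∘ₗ θ) (f₂ := LinearMap.id) fun i => ?_)
    rw [LinearMap.comp_apply, hθ, map_smul, hηα, hη, map_smulₛₗ, hβ, smul_smul, map_pow,
      map_neg, map_one, ← pow_add, Even.neg_one_pow ⟨_, rfl⟩, one_smul, LinearMap.id_apply]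
  have hθsurj : Function.Surjective θ := by
    rw [← LinearMap.range_eq_top, eq_top_iff, ← LinearMap.range_eq_top.mpr hα.surjective,
      LinearMap.range_eq_map, ← bM.span_eq, Submodule.map_span, Submodule.span_le]
    rintro _ ⟨_, ⟨i, rfl⟩, rfl⟩
    refine ⟨(-1 : A) ^ n i • bN i, ?_⟩
    rw [map_smul, hθ, smul_smul, ← pow_add, Even.neg_one_pow ⟨_, rfl⟩, one_smul]
  refine ⟨θ, fun m => ?_, hηθ⟩
  obtain ⟨x, rfl⟩ := hθsurj m
  rw [hηθ]

end Twisted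

theorem CoxeterSystem.induction_simple_mul_of_length_lt {B W : Type*} [Group W]
    {M : CoxeterMatrix B} (cs : CoxeterSystem M W) {p : W → Prop} (one : p 1)
    (mul : ∀ (i : B) (w : W), cs.length w < cs.length (cs.simple i * w) → p w →
      p (cs.simple i * w)) (w : W) : p w := by
  induction hn : cs.length w using Nat.strong_induction_on generalizing w with
  | _ n ih =>
    rcases eq_or_ne w 1 with rfl | hw
    · exact one
    obtain ⟨i, hi⟩ := cs.exists_leftDescent_of_ne_one hw
    have hlen := cs.isLeftDescent_iff.mp hi
    have := mul i (cs.simple i * w) (by rw [cs.simple_mul_simple_cancel_left]; omega)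
      (ih _ (by omega) _ rfl)
    rwa [cs.simple_mul_simple_cancel_left] at this

section Hecke

variable {B W : Type*} [Group W] {CM : CoxeterMatrix B} (cs : CoxeterSystem CM W)
  {A : Type*} [CommRing A] {H : Type*} [Ring H] [Algebra A H] {T : W → H}

theorem mem_of_simple_mul_mem {E : Set W}
    (hIdeal : ∀ w ∈ E, ∀ u z : W, w = z * u →
      cs.length w = cs.length z + cs.length u → u ∈ E)
    {i : B} {w : W} (hw : cs.simple i * w ∈ E)
    (hlt : cs.length w < cs.length (cs.simple i * w)) : w ∈ E := by
  refine hIdeal _ hw w (cs.simple i) rfl ?_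
  rw [cs.length_simple]
  rcases cs.length_simple_mul w i with h | h <;> omega

theorem apply_eq_T_smul_apply_one {M : Type*} [MulAction H M] {E : Set W} (hE1 : (1 : W) ∈ E)
    (hIdeal : ∀ w ∈ E, ∀ u z : W, w = z * u →
      cs.length w = cs.length z + cs.length u → u ∈ E)
    (hT1 : T 1 = 1)
    (hTmul : ∀ (i : B) (w : W), cs.length w < cs.length (cs.simple i * w) →
      T (cs.simple i) * T w = T (cs.simple i * w))
    (Γ : E → M)
    (hplus : ∀ (s : B) (w : E) (h : cs.simple s * (w : W) ∈ E),
      cs.length (w : W) < cs.length (cs.simple s * (w : W)) →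
      T (cs.simple s) • Γ w = Γ ⟨cs.simple s * (w : W), h⟩) (w : E) :
    Γ w = T w • Γ ⟨1, hE1⟩ := by
  suffices ∀ (w : W) (hw : w ∈ E), Γ ⟨w, hw⟩ = T w • Γ ⟨1, hE1⟩ from this w w.2
  refine cs.induction_simple_mul_of_length_lt (fun _ => by rw [hT1, one_smul]) ?_
  intro i w hlt ih hsw
  have hw := mem_of_simple_mul_mem cs hIdeal hsw hlt
  rw [← hplus i ⟨w, hw⟩ hsw hlt, ih hw, ← mul_smul, hTmul i w hlt]

theorem adjoin_range_T_simple_eq_top (hspan : Submodule.span A (Set.range T) = ⊤)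
    (hT1 : T 1 = 1)
    (hTmul : ∀ (i : B) (w : W), cs.length w < cs.length (cs.simple i * w) →
      T (cs.simple i) * T w = T (cs.simple i * w)) :
    Algebra.adjoin A (Set.range fun i => T (cs.simple i)) = ⊤ := by
  have hT : ∀ w, T w ∈ Algebra.adjoin A (Set.range fun i => T (cs.simple i)) :=
    cs.induction_simple_mul_of_length_lt (hT1 ▸ Subalgebra.one_mem _) fun i w hlt hw =>
      hTmul i w hlt ▸ Subalgebra.mul_mem _ (Algebra.subset_adjoin ⟨i, rfl⟩) hw
  have hle : Submodule.span A (Set.range T) ≤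
      Subalgebra.toSubmodule (Algebra.adjoin A (Set.range fun i => T (cs.simple i))) :=
    Submodule.span_le.mpr (Set.range_subset_iff.mpr hT)
  exact eq_top_iff.mpr fun h _ => hle (hspan ▸ Submodule.mem_top)

variable {q q' : B → A} {barH : H → H}

theorem involutive_of_map_T_simple (Φ : H →ₐ[A] H)
    (hgen : Algebra.adjoin A (Set.range fun i => T (cs.simple i)) = ⊤)
    (hbarHT : ∀ i, barH (T (cs.simple i)) = T (cs.simple i) + (q' i - q i) • (1 : H))
    (hΦ : ∀ i, Φ (T (cs.simple i)) = -barH (T (cs.simple i))) :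
    Function.Involutive Φ := by
  suffices Φ.comp Φ = AlgHom.id A H from fun h => AlgHom.congr_fun this h
  refine AlgHom.ext_of_adjoin_eq_top hgen ?_
  rintro _ ⟨i, rfl⟩
  simp only [AlgHom.comp_apply, AlgHom.id_apply, hΦ, hbarHT, map_neg, map_add, map_smul,
    map_one]
  abel

theorem map_barH_eq_barH_map {σ : A →+* A} (Φ : H →ₐ[A] H)
    (hgen : Algebra.adjoin A (Set.range fun i => T (cs.simple i)) = ⊤)
    (hbarHadd : ∀ h h' : H, barH (h + h') = barH h + barH h')
    (hbarHmul : ∀ h h' : H, barH (h * h') = barH h * barH h')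
    (hbarHalg : ∀ a, barH (algebraMap A H a) = algebraMap A H (σ a))
    (hbarHinv : ∀ h : H, barH (barH h) = h)
    (hbarHT : ∀ i, barH (T (cs.simple i)) = T (cs.simple i) + (q' i - q i) • (1 : H))
    (hΦ : ∀ i, Φ (T (cs.simple i)) = -barH (T (cs.simple i))) (h : H) :
    Φ (barH h) = barH (Φ h) := by
  have hneg : ∀ x, barH (-x) = -barH x := map_neg (AddMonoidHom.mk' barH hbarHadd)
  have hh : h ∈ Algebra.adjoin A (Set.range fun i => T (cs.simple i)) := hgen ▸ Algebra.mem_top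
  induction hh using Algebra.adjoin_induction with
  | mem x hx =>
    obtain ⟨i, rfl⟩ := hx
    rw [hΦ, hneg, hbarHinv, hbarHT, map_add, map_smul, map_one, hΦ, hbarHT]
    abel
  | algebraMap a => rw [hbarHalg, AlgHom.commutes, AlgHom.commutes, hbarHalg]
  | add x y _ _ hx hy => rw [hbarHadd, map_add, map_add, hbarHadd, hx, hy]
  | mul x y _ _ hx hy => rw [hbarHmul, map_mul, map_mul, hbarHmul, hx, hy]

end Hecke

section Dual

variable {B W : Type*} [Group W] {CM : CoxeterMatrix B} (cs : CoxeterSystem CM W)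
  {J : Set B} {E : Set W} {A : Type*} [CommRing A] {H : Type*} [Ring H]
  {T : W → H} {q q' : B → A}
  {Mo : Type*} [AddCommGroup Mo] [Module A Mo] [Module H Mo]
  {Mt : Type*} [AddCommGroup Mt] [Module A Mt] [Module H Mt]

theorem map_T_simple_smul_of_dual {σ : A →+* A} (hσ : ∀ a, σ (σ a) = a)
    (hσq : ∀ i, σ (q i) = q' i)
    (hIdeal : ∀ w ∈ E, ∀ u z : W, w = z * u →
      cs.length w = cs.length z + cs.length u → u ∈ E)
    (Γ : E → Mo)
    (hminus : ∀ (s : B) (w : E) (h : cs.simple s * (w : W) ∈ E),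
      cs.length (cs.simple s * (w : W)) < cs.length (w : W) →
      T (cs.simple s) • Γ w = Γ ⟨cs.simple s * (w : W), h⟩ + (q s - q' s) • Γ w)
    (hplus : ∀ (s : B) (w : E) (h : cs.simple s * (w : W) ∈ E),
      cs.length (w : W) < cs.length (cs.simple s * (w : W)) →
      T (cs.simple s) • Γ w = Γ ⟨cs.simple s * (w : W), h⟩)
    (h0minus : ∀ (s : B) (w : E),
      cs.length (w : W) < cs.length (cs.simple s * (w : W)) →
      cs.simple s * (w : W) ∉ DJset cs J →
      T (cs.simple s) • Γ w = - (q' s) • Γ w)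
    (r : B → E → (E →₀ A))
    (h0plus : ∀ (s : B) (w : E),
      cs.length (w : W) < cs.length (cs.simple s * (w : W)) →
      cs.simple s * (w : W) ∈ DJset cs J →
      cs.simple s * (w : W) ∉ E →
      T (cs.simple s) • Γ w = q s • Γ w - (r s w).sum fun z a => a • Γ z)
    (Γt : E → Mt)
    (htminus : ∀ (s : B) (w : E) (h : cs.simple s * (w : W) ∈ E),
      cs.length (cs.simple s * (w : W)) < cs.length (w : W) →
      T (cs.simple s) • Γt w = Γt ⟨cs.simple s * (w : W), h⟩ + (q s - q' s) • Γt w)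
    (htplus : ∀ (s : B) (w : E) (h : cs.simple s * (w : W) ∈ E),
      cs.length (w : W) < cs.length (cs.simple s * (w : W)) →
      T (cs.simple s) • Γt w = Γt ⟨cs.simple s * (w : W), h⟩)
    (ht0minus : ∀ (s : B) (w : E),
      cs.length (w : W) < cs.length (cs.simple s * (w : W)) →
      cs.simple s * (w : W) ∉ DJset cs J →
      T (cs.simple s) • Γt w = q s • Γt w)
    (rt : B → E → (E →₀ A))
    (hrt : ∀ (s : B) (w : E) (z : E),
      (rt s w) z = (-1 : A) ^ (cs.length (z : W) + cs.length (w : W)) * σ ((r s w) z))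
    (ht0plus : ∀ (s : B) (w : E),
      cs.length (w : W) < cs.length (cs.simple s * (w : W)) →
      cs.simple s * (w : W) ∈ DJset cs J →
      cs.simple s * (w : W) ∉ E →
      T (cs.simple s) • Γt w = - (q' s) • Γt w + (rt s w).sum fun z a => a • Γt z)
    (β : Mt →ₛₗ[σ] Mt) (η : Mo →ₗ[A] Mt)
    (hη : ∀ w, η (Γ w) = (-1 : A) ^ cs.length (w : W) • β (Γt w)) (i : B) (w : E) :
    η (T (cs.simple i) • Γ w) =
      (-1 : A) ^ (cs.length (w : W) + 1) • β (T (cs.simple i) • Γt w) := by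
  have hσq' : σ (q' i) = q i := by rw [← hσq, hσ]
  rcases cs.length_simple_mul (w : W) i with hup | hdown
  · by_cases hmem : cs.simple i * (w : W) ∈ E
    · rw [hplus i w hmem (by omega), htplus i w hmem (by omega), hη, hup]
    by_cases hDJ : cs.simple i * (w : W) ∈ DJset cs J
    · rw [h0plus i w (by omega) hDJ hmem, ht0plus i w (by omega) hDJ hmem, map_sub, map_smul,
        hη, map_finsuppSum_twisted hσ β η hη (r i w) (rt i w) (hrt i w), map_add, map_smulₛₗ,
        map_neg, hσq']
      module
    · rw [h0minus i w (by omega) hDJ, ht0minus i w (by omega) hDJ, map_smul, hη, map_smulₛₗ,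
        hσq]
      module
  · have hmem : cs.simple i * (w : W) ∈ E := mem_of_simple_mul_mem cs hIdeal
      (by rw [cs.simple_mul_simple_cancel_left]; exact w.2)
      (by rw [cs.simple_mul_simple_cancel_left]; omega)
    rw [hminus i w hmem (by omega), htminus i w hmem (by omega), map_add, map_smul, hη, hη,
      map_add, map_smulₛₗ, map_sub, hσq, hσq', ← hdown]
    module

end Dual

theorem stmt_14_general {B W : Type*} [Group W] {CM : CoxeterMatrix B} (cs : CoxeterSystem CM W)
    (J : Set B) (E : Set W)
    (hE1 : (1 : W) ∈ E)
    (hIdeal : ∀ w ∈ E, ∀ u z : W, w = z * u →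
      cs.length w = cs.length z + cs.length u → u ∈ E)
    {A : Type*} [CommRing A]
    (bar : A ≃+* A) (hbarinv : ∀ a : A, bar (bar a) = a)
    (q q' : B → A) (hbarq : ∀ s, bar (q s) = q' s)
    -- the Hecke algebra `H`
    {H : Type*} [Ring H] [Algebra A H]
    (T : W → H) (bH : Module.Basis W A H) (hbH : ∀ w : W, bH w = T w) (hT1 : T 1 = 1)
    (hTmul : ∀ (s : B) (w : W),
      (cs.length w < cs.length (cs.simple s * w) →
        T (cs.simple s) * T w = T (cs.simple s * w)) ∧
      (cs.length (cs.simple s * w) < cs.length w →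
        T (cs.simple s) * T w = T (cs.simple s * w) + (q s - q' s) • T w))
    (barH : H → H)
    (hbarHadd : ∀ h h' : H, barH (h + h') = barH h + barH h')
    (hbarHmul : ∀ h h' : H, barH (h * h') = barH h * barH h')
    (hbarHsemi : ∀ (a : A) (h : H), barH (a • h) = bar a • barH h)
    (hbarHinv : ∀ h : H, barH (barH h) = h)
    (hbarHT : ∀ s : B,
      barH (T (cs.simple s)) = T (cs.simple s) + (q' s - q s) • (1 : H))
    -- the algebra map `Φ` with `Φ(T_w) = ε_w T̄_w`
    (Φ : H →ₐ[A] H)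
    (hΦ : ∀ w : W, Φ (T w) = ((-1 : A) ^ cs.length w) • barH (T w))
    -- the module `M(E_J, L)`
    {Mo : Type*} [AddCommGroup Mo] [Module A Mo] [Module H Mo] [IsScalarTower A H Mo]
    (Γ : E → Mo) (bM : Module.Basis E A Mo) (hbM : ∀ e : E, bM e = Γ e)
    (hminus : ∀ (s : B) (w : E) (h : cs.simple s * (w : W) ∈ E),
      cs.length (cs.simple s * (w : W)) < cs.length (w : W) →
      T (cs.simple s) • Γ w = Γ ⟨cs.simple s * (w : W), h⟩ + (q s - q' s) • Γ w)
    (hplus : ∀ (s : B) (w : E) (h : cs.simple s * (w : W) ∈ E),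
      cs.length (w : W) < cs.length (cs.simple s * (w : W)) →
      T (cs.simple s) • Γ w = Γ ⟨cs.simple s * (w : W), h⟩)
    (h0minus : ∀ (s : B) (w : E),
      cs.length (w : W) < cs.length (cs.simple s * (w : W)) →
      cs.simple s * (w : W) ∉ DJset cs J →
      T (cs.simple s) • Γ w = - (q' s) • Γ w)
    (r : B → E → (E →₀ A))
    (h0plus : ∀ (s : B) (w : E),
      cs.length (w : W) < cs.length (cs.simple s * (w : W)) →
      cs.simple s * (w : W) ∈ DJset cs J →
      cs.simple s * (w : W) ∉ E →
      T (cs.simple s) • Γ w = q s • Γ w - (r s w).sum fun z a => a • Γ z)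
    (barM : Mo → Mo)
    (hbarMadd : ∀ m m' : Mo, barM (m + m') = barM m + barM m')
    (hbarM1 : barM (Γ ⟨1, hE1⟩) = Γ ⟨1, hE1⟩)
    (hbarMH : ∀ (h : H) (m : Mo), barM (h • m) = barH h • barM m)
    -- the dual module `M̃(E_J, L)`
    {Mt : Type*} [AddCommGroup Mt] [Module A Mt] [Module H Mt] [IsScalarTower A H Mt]
    (Γt : E → Mt) (bMt : Module.Basis E A Mt) (hbMt : ∀ e : E, bMt e = Γt e)
    (htminus : ∀ (s : B) (w : E) (h : cs.simple s * (w : W) ∈ E),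
      cs.length (cs.simple s * (w : W)) < cs.length (w : W) →
      T (cs.simple s) • Γt w = Γt ⟨cs.simple s * (w : W), h⟩ + (q s - q' s) • Γt w)
    (htplus : ∀ (s : B) (w : E) (h : cs.simple s * (w : W) ∈ E),
      cs.length (w : W) < cs.length (cs.simple s * (w : W)) →
      T (cs.simple s) • Γt w = Γt ⟨cs.simple s * (w : W), h⟩)
    (ht0minus : ∀ (s : B) (w : E),
      cs.length (w : W) < cs.length (cs.simple s * (w : W)) →
      cs.simple s * (w : W) ∉ DJset cs J →
      T (cs.simple s) • Γt w = q s • Γt w)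
    (rt : B → E → (E →₀ A))
    (hrt : ∀ (s : B) (w : E) (z : E),
      (rt s w) z =
        (-1 : A) ^ (cs.length (z : W) + cs.length (w : W)) * bar ((r s w) z))
    (ht0plus : ∀ (s : B) (w : E),
      cs.length (w : W) < cs.length (cs.simple s * (w : W)) →
      cs.simple s * (w : W) ∈ DJset cs J →
      cs.simple s * (w : W) ∉ E →
      T (cs.simple s) • Γt w = - (q' s) • Γt w + (rt s w).sum fun z a => a • Γt z)
    (barMt : Mt → Mt)
    (hbarMtadd : ∀ m m' : Mt, barMt (m + m') = barMt m + barMt m')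
    (hbarMt1 : barMt (Γt ⟨1, hE1⟩) = Γt ⟨1, hE1⟩)
    (hbarMtH : ∀ (h : H) (m : Mt), barMt (h • m) = barH h • barMt m) :
    ∃ η : Mo →+ Mt,
      η (Γ ⟨1, hE1⟩) = Γt ⟨1, hE1⟩ ∧
      (∀ (h : H) (m : Mo), η (h • m) = Φ h • η m) ∧
      (∀ η' : Mo →+ Mt,
        (η' (Γ ⟨1, hE1⟩) = Γt ⟨1, hE1⟩ ∧
          ∀ (h : H) (m : Mo), η' (h • m) = Φ h • η' m) → η' = η) ∧
      (∀ w : E, η (Γ w) = ((-1 : A) ^ cs.length (w : W)) • barMt (Γt w)) ∧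
      (∀ m : Mo, η (barM m) = barMt (η m)) ∧
      Function.Bijective η ∧
      ∃ θ : Mt →+ Mo,
        (∀ m : Mo, θ (η m) = m) ∧ (∀ m : Mt, η (θ m) = m) ∧
        θ (Γt ⟨1, hE1⟩) = Γ ⟨1, hE1⟩ ∧
        ∀ (h : H) (m : Mt), θ (h • m) = Φ h • θ m := by
  have hTs : ∀ (i : B) (w : W), cs.length w < cs.length (cs.simple i * w) →
      T (cs.simple i) * T w = T (cs.simple i * w) := fun i w => (hTmul i w).1
  have hgen := adjoin_range_T_simple_eq_top cs (by rw [← funext hbH]; exact bH.span_eq) hT1 hTs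
  have hΦs : ∀ i, Φ (T (cs.simple i)) = -barH (T (cs.simple i)) := fun i => by
    rw [hΦ, cs.length_simple, pow_one, neg_one_smul]
  have hbarHalg := bar_algebraMap (σ := (bar : A →+* A)) hbarHmul hbarHsemi hbarHinv
  have hgenM := exists_smul_eq_of_basis bM fun e =>
    (hbM e).trans (apply_eq_T_smul_apply_one cs hE1 hIdeal hT1 hTs Γ hplus e)
  have hgenMt := exists_smul_eq_of_basis bMt fun e =>
    (hbMt e).trans (apply_eq_T_smul_apply_one cs hE1 hIdeal hT1 hTs Γt htplus e)
  let barMₛₗ : Mo →ₛₗ[(bar : A →+* A)] Mo :=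
    ⟨⟨barM, hbarMadd⟩, map_smul_of_map_hsmul hbarHalg hbarMH⟩
  let barMtₛₗ : Mt →ₛₗ[(bar : A →+* A)] Mt :=
    ⟨⟨barMt, hbarMtadd⟩, map_smul_of_map_hsmul hbarHalg hbarMtH⟩
  let η := bM.constr A fun w => (-1 : A) ^ cs.length (w : W) • barMt (Γt w)
  have hηΓ : ∀ w, η (Γ w) = (-1 : A) ^ cs.length (w : W) • barMt (Γt w) := fun w => by
    rw [← hbM]; exact bM.constr_basis A _ w
  have hη1 : η (Γ ⟨1, hE1⟩) = Γt ⟨1, hE1⟩ := by simp [hηΓ, hbarMt1]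
  have hηH : ∀ h m, η (h • m) = Φ h • η m := η.map_smul_eq_of_adjoin_eq_top bM hgen Φ <| by
    rintro _ ⟨i, rfl⟩ w
    rw [hbM, map_T_simple_smul_of_dual cs hbarinv hbarq hIdeal Γ hminus hplus h0minus r h0plus
      Γt htminus htplus ht0minus rt hrt ht0plus barMtₛₗ η hηΓ, hηΓ, smul_comm (Φ _), hΦs,
      neg_smul, ← hbarMtH, pow_succ, mul_neg_one, neg_smul, smul_neg]
    rfl
  have hηbar := map_bar_eq_bar_map_of_generator hgenM
    (map_barH_eq_barH_map cs Φ hgen hbarHadd hbarHmul hbarHalg hbarHinv hbarHT hΦs) hηH hbarMH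
    hbarMtH (by rw [hbarM1, hη1, hbarMt1])
  obtain ⟨θ, hθη, hηθ⟩ := exists_inverse_of_twisted bM bMt barMₛₗ
    (involutive_of_map_smul_of_generator hgenM hbarHinv hbarMH hbarM1) barMtₛₗ
    (involutive_of_map_smul_of_generator hgenMt hbarHinv hbarMtH hbarMt1) η
    (fun w => cs.length (w : W)) (fun w => by rw [hbM, hbMt]; exact hηΓ w) hηbar
  refine ⟨η.toAddMonoidHom, hη1, hηH, fun η' ⟨h1, h2⟩ => AddMonoidHom.ext (congrFun
    (eq_of_map_smul_eq_of_generator hgenM h2 hηH (h1.trans hη1.symm))), hηΓ, hηbar,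
    ⟨hθη.injective, hηθ.surjective⟩, θ.toAddMonoidHom, hθη, hηθ, ?_, fun h m => hθη.injective ?_⟩
  · rw [← hη1]; exact hθη _
  · show η (θ (h • m)) = η (Φ h • θ m)
    rw [hηθ, hηH, involutive_of_map_T_simple cs Φ hgen hbarHT hΦs, hηθ]

/-- Theorem 3.1 (II): for a `W`-graph ideal `E_J` with dual modules `M(E_J,L)`
(basis `Γ_w`) and `M̃(E_J,L)` (basis `Γ̃_w`), there is a unique additive map
`η : M → M̃` with `η(Γ₁) = Γ̃₁` and `η(hΓ) = Φ(h)η(Γ)`; moreover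
`η(Γ_w) = ε_w Γ̃̄_w`, `η` commutes with the bar involutions, is bijective, and
its inverse `θ` satisfies `θ(Γ̃₁) = Γ₁` and `θ(hΓ̃) = Φ(h)θ(Γ̃)`. -/
theorem stmt_14 {B W : Type*} [Group W] {CM : CoxeterMatrix B} (cs : CoxeterSystem CM W)
    (J : Set B) (E : Set W)
    (hE1 : (1 : W) ∈ E) (hEDJ : E ⊆ DJset cs J)
    (hIdeal : ∀ w ∈ E, ∀ u z : W, w = z * u →
      cs.length w = cs.length z + cs.length u → u ∈ E)
    {A : Type*} [CommRing A]
    (bar : A ≃+* A) (hbarinv : ∀ a : A, bar (bar a) = a)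
    (q q' : B → A) (hq : ∀ s, q s * q' s = 1) (hbarq : ∀ s, bar (q s) = q' s)
    -- the Hecke algebra `H`
    {H : Type*} [Ring H] [Algebra A H]
    (T : W → H) (bH : Module.Basis W A H) (hbH : ∀ w : W, bH w = T w) (hT1 : T 1 = 1)
    (hTmul : ∀ (s : B) (w : W),
      (cs.length w < cs.length (cs.simple s * w) →
        T (cs.simple s) * T w = T (cs.simple s * w)) ∧
      (cs.length (cs.simple s * w) < cs.length w →
        T (cs.simple s) * T w = T (cs.simple s * w) + (q s - q' s) • T w))
    (barH : H → H)
    (hbarHadd : ∀ h h' : H, barH (h + h') = barH h + barH h')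
    (hbarHmul : ∀ h h' : H, barH (h * h') = barH h * barH h')
    (hbarHsemi : ∀ (a : A) (h : H), barH (a • h) = bar a • barH h)
    (hbarHinv : ∀ h : H, barH (barH h) = h)
    (hbarHT : ∀ s : B,
      barH (T (cs.simple s)) = T (cs.simple s) + (q' s - q s) • (1 : H))
    -- the algebra map `Φ` with `Φ(T_w) = ε_w T̄_w`
    (Φ : H →ₐ[A] H)
    (hΦ : ∀ w : W, Φ (T w) = ((-1 : A) ^ cs.length w) • barH (T w))
    -- the module `M(E_J, L)`
    {Mo : Type*} [AddCommGroup Mo] [Module A Mo] [Module H Mo] [IsScalarTower A H Mo]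
    (Γ : E → Mo) (bM : Module.Basis E A Mo) (hbM : ∀ e : E, bM e = Γ e)
    (hminus : ∀ (s : B) (w : E) (h : cs.simple s * (w : W) ∈ E),
      cs.length (cs.simple s * (w : W)) < cs.length (w : W) →
      T (cs.simple s) • Γ w = Γ ⟨cs.simple s * (w : W), h⟩ + (q s - q' s) • Γ w)
    (hplus : ∀ (s : B) (w : E) (h : cs.simple s * (w : W) ∈ E),
      cs.length (w : W) < cs.length (cs.simple s * (w : W)) →
      T (cs.simple s) • Γ w = Γ ⟨cs.simple s * (w : W), h⟩)
    (h0minus : ∀ (s : B) (w : E),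
      cs.length (w : W) < cs.length (cs.simple s * (w : W)) →
      cs.simple s * (w : W) ∉ DJset cs J →
      T (cs.simple s) • Γ w = - (q' s) • Γ w)
    (r : B → E → (E →₀ A))
    (hrsupp : ∀ (s : B) (w : E) (z : E), (r s w) z ≠ 0 →
      bruhatLE cs (z : W) (w : W) ∧ (z : W) ≠ (w : W))
    (h0plus : ∀ (s : B) (w : E),
      cs.length (w : W) < cs.length (cs.simple s * (w : W)) →
      cs.simple s * (w : W) ∈ DJset cs J →
      cs.simple s * (w : W) ∉ E →
      T (cs.simple s) • Γ w = q s • Γ w - (r s w).sum fun z a => a • Γ z)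
    (barM : Mo → Mo)
    (hbarMadd : ∀ m m' : Mo, barM (m + m') = barM m + barM m')
    (hbarM1 : barM (Γ ⟨1, hE1⟩) = Γ ⟨1, hE1⟩)
    (hbarMH : ∀ (h : H) (m : Mo), barM (h • m) = barH h • barM m)
    -- the dual module `M̃(E_J, L)`
    {Mt : Type*} [AddCommGroup Mt] [Module A Mt] [Module H Mt] [IsScalarTower A H Mt]
    (Γt : E → Mt) (bMt : Module.Basis E A Mt) (hbMt : ∀ e : E, bMt e = Γt e)
    (htminus : ∀ (s : B) (w : E) (h : cs.simple s * (w : W) ∈ E),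
      cs.length (cs.simple s * (w : W)) < cs.length (w : W) →
      T (cs.simple s) • Γt w = Γt ⟨cs.simple s * (w : W), h⟩ + (q s - q' s) • Γt w)
    (htplus : ∀ (s : B) (w : E) (h : cs.simple s * (w : W) ∈ E),
      cs.length (w : W) < cs.length (cs.simple s * (w : W)) →
      T (cs.simple s) • Γt w = Γt ⟨cs.simple s * (w : W), h⟩)
    (ht0minus : ∀ (s : B) (w : E),
      cs.length (w : W) < cs.length (cs.simple s * (w : W)) →
      cs.simple s * (w : W) ∉ DJset cs J →
      T (cs.simple s) • Γt w = q s • Γt w)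
    (rt : B → E → (E →₀ A))
    (hrt : ∀ (s : B) (w : E) (z : E),
      (rt s w) z =
        (-1 : A) ^ (cs.length (z : W) + cs.length (w : W)) * bar ((r s w) z))
    (ht0plus : ∀ (s : B) (w : E),
      cs.length (w : W) < cs.length (cs.simple s * (w : W)) →
      cs.simple s * (w : W) ∈ DJset cs J →
      cs.simple s * (w : W) ∉ E →
      T (cs.simple s) • Γt w = - (q' s) • Γt w + (rt s w).sum fun z a => a • Γt z)
    (barMt : Mt → Mt)
    (hbarMtadd : ∀ m m' : Mt, barMt (m + m') = barMt m + barMt m')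
    (hbarMt1 : barMt (Γt ⟨1, hE1⟩) = Γt ⟨1, hE1⟩)
    (hbarMtH : ∀ (h : H) (m : Mt), barMt (h • m) = barH h • barMt m) :
    ∃ η : Mo →+ Mt,
      η (Γ ⟨1, hE1⟩) = Γt ⟨1, hE1⟩ ∧
      (∀ (h : H) (m : Mo), η (h • m) = Φ h • η m) ∧
      (∀ η' : Mo →+ Mt,
        (η' (Γ ⟨1, hE1⟩) = Γt ⟨1, hE1⟩ ∧
          ∀ (h : H) (m : Mo), η' (h • m) = Φ h • η' m) → η' = η) ∧
      (∀ w : E, η (Γ w) = ((-1 : A) ^ cs.length (w : W)) • barMt (Γt w)) ∧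
      (∀ m : Mo, η (barM m) = barMt (η m)) ∧
      Function.Bijective η ∧
      ∃ θ : Mt →+ Mo,
        (∀ m : Mo, θ (η m) = m) ∧ (∀ m : Mt, η (θ m) = m) ∧
        θ (Γt ⟨1, hE1⟩) = Γ ⟨1, hE1⟩ ∧
        ∀ (h : H) (m : Mt), θ (h • m) = Φ h • θ m :=
  stmt_14_general cs J E hE1 hIdeal bar hbarinv q q' hbarq T bH hbH hT1 hTmul barH hbarHadd hbarHmul
    hbarHsemi hbarHinv hbarHT Φ hΦ Γ bM hbM hminus hplus h0minus r h0plus barM hbarMadd hbarM1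
    hbarMH Γt bMt hbMt htminus htplus ht0minus rt hrt ht0plus barMt hbarMtadd hbarMt1 hbarMtH
end

section
/- In the W-graph ideal setting, let R and R̃ be the matrices of the bar involutions on M(E_J,L) and M̃(E_J,L) respectively: Γ̄_y = Σ_x R_{x,y} Γ_x and Γ̃̄_y = Σ_x R̃_{x,y} Γ̃_x. Then R̄_{x,y} = ε_x ε_y R̃_{x,y} for all x, y ∈ E_J. -/
/-!
The map `η (Σ a_x Γ_x) = Σ ε_x ā_x Γ̃_x` is bar-semilinear, and the multiplication rules of the
two modules, compared case by case on the basis, give `η (T_s m) = -T̃_s (η m)`. Both bar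
involutions fix `Γ_1` and satisfy `(T_s m)‾ = T_s m̄ + (q'_s - q_s) m̄`, so the set of `m` with
`η m̄ = (η m)‾` contains `Γ_1` and is stable under `T_s`. Every `Γ_w` is reached from `Γ_1` along
a reduced word, so `η Γ̄_y = (η Γ_y)‾`; its `Γ̃_x`-coefficient reads `ε_x R̄_{x,y} = ε_y R̃_{x,y}`.
-/

open Finsupp

section SignedBar

variable {E A : Type*} [CommRing A]

noncomputable def signedBar (σ : A →+* A) (ε : E → A) : (E →₀ A) →ₛₗ[σ] (E →₀ A) where
  toFun m := onFinset m.support (fun x => ε x * σ (m x)) fun x hx => by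
    rw [mem_support_iff]
    intro h
    simp [h] at hx
  map_add' m m' := by ext x; simp [mul_add]
  map_smul' a m := by
    ext x
    simp only [onFinset_apply, coe_smul, Pi.smul_apply, smul_eq_mul, map_mul]
    ring

@[simp]
theorem signedBar_apply (σ : A →+* A) (ε : E → A) (m : E →₀ A) (x : E) :
    signedBar σ ε m x = ε x * σ (m x) :=
  rfl

theorem signedBar_single_one (σ : A →+* A) (ε : E → A) (w : E) :
    signedBar σ ε (single w 1) = ε w • single w 1 := by
  ext x
  obtain rfl | hx := eq_or_ne w x <;> simp [*]

theorem apply_eq_mul_of_signedBar_eq {σ : A →+* A} {ε : E → A} (hσε : ∀ x, σ (ε x) = ε x)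
    (hε : ∀ x, ε x * ε x = 1) {g : (E →₀ A) → (E →₀ A)} (hg : ∀ a m, g (a • m) = σ a • g m)
    {m : E →₀ A} {y : E} (h : signedBar σ ε m = g (signedBar σ ε (single y 1))) (x : E) :
    σ (m x) = ε x * ε y * g (single y 1) x := by
  have hx := congr($h x)
  rw [signedBar_single_one, hg, hσε, signedBar_apply, Finsupp.smul_apply, smul_eq_mul] at hx
  linear_combination ε x * hx - σ (m x) * hε x

end SignedBar

theorem map_bar_T_of_map_bar {A M : Type*} [CommRing A] [AddCommGroup M] [Module A M]
    {σ : A →+* A} (η : M →ₛₗ[σ] M) (T T' : M →ₗ[A] M) (bar bar' : M → M) {c : A}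
    (hc : σ c = -c) (hηT : ∀ m, η (T m) = -T' (η m))
    (hbarT : ∀ m, bar (T m) = T (bar m) + c • bar m)
    (hbarT' : ∀ m, bar' (T' m) = T' (bar' m) + c • bar' m)
    (hbar'_neg : ∀ m, bar' (-m) = -bar' m) {m : M} (hm : η (bar m) = bar' (η m)) :
    η (bar (T m)) = bar' (η (T m)) := by
  rw [hbarT, map_add, LinearMap.map_smulₛₗ, hηT, hm, hc, hηT, hbar'_neg, hbarT', neg_add,
    neg_smul]

section Coxeter

variable {B W : Type*} [Group W] {CM : CoxeterMatrix B} (cs : CoxeterSystem CM W)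

theorem neg_one_pow_length_simple_mul {A : Type*} [Ring A] (s : B) (w : W) :
    (-1 : A) ^ cs.length (cs.simple s * w) = -(-1) ^ cs.length w := by
  rcases cs.length_simple_mul w s with h | h
  · rw [h, pow_succ, mul_neg_one]
  · rw [← h, pow_succ, mul_neg_one, neg_neg]

theorem simple_mul_mem_of_isLeftDescent {E : Set W}
    (hIdeal : ∀ w ∈ E, ∀ u z : W, w = z * u →
      cs.length w = cs.length z + cs.length u → u ∈ E)
    {w : W} (hw : w ∈ E) {s : B} (hs : cs.IsLeftDescent w s) : cs.simple s * w ∈ E :=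
  hIdeal w hw _ (cs.simple s) (cs.simple_mul_simple_cancel_left s).symm <| by
    rw [cs.length_simple, ← cs.isLeftDescent_iff.mp hs, add_comm]

theorem suffixClosed_induction {E : Set W} (hE1 : (1 : W) ∈ E)
    (hIdeal : ∀ w ∈ E, ∀ u z : W, w = z * u →
      cs.length w = cs.length z + cs.length u → u ∈ E)
    {P : E → Prop} (h1 : P ⟨1, hE1⟩)
    (hstep : ∀ (s : B) (w : E) (h : cs.simple s * (w : W) ∈ E),
      cs.length (w : W) < cs.length (cs.simple s * (w : W)) → P w → P ⟨_, h⟩)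
    (w : E) : P w := by
  obtain ⟨w, hw⟩ := w
  induction hn : cs.length w generalizing w with
  | zero =>
    obtain rfl := cs.length_eq_zero_iff.mp hn
    exact h1
  | succ n ih =>
    obtain ⟨s, hs⟩ := cs.exists_leftDescent_of_ne_one (w := w) (by rintro rfl; simp at hn)
    have hsw := simple_mul_mem_of_isLeftDescent cs hIdeal hw hs
    have hlen := cs.isLeftDescent_iff.mp hs
    have hcancel := cs.simple_mul_simple_cancel_left (w := w) s
    have := hstep s ⟨_, hsw⟩ (by rwa [hcancel]) (by simp only [hcancel]; omega)
      (ih _ hsw (by omega))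
    simpa only [hcancel] using this

end Coxeter

theorem signedBar_T_single_one {B W : Type*} [Group W] {CM : CoxeterMatrix B}
    (cs : CoxeterSystem CM W) (J : Set B) (E : Set W)
    (hIdeal : ∀ w ∈ E, ∀ u z : W, w = z * u →
      cs.length w = cs.length z + cs.length u → u ∈ E)
    {A : Type*} [CommRing A] {σ : A →+* A} {q q' : B → A}
    (hσq : ∀ s, σ (q s) = q' s) (hσq' : ∀ s, σ (q' s) = q s)
    (Ts Tst : B → (E →₀ A) →ₗ[A] (E →₀ A)) (r rt : B → E → (E →₀ A))
    (hminus : ∀ (s : B) (w : E) (h : cs.simple s * (w : W) ∈ E),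
      cs.length (cs.simple s * (w : W)) < cs.length (w : W) →
      Ts s (single w 1) = single ⟨cs.simple s * (w : W), h⟩ 1 + (q s - q' s) • single w 1)
    (hplus : ∀ (s : B) (w : E) (h : cs.simple s * (w : W) ∈ E),
      cs.length (w : W) < cs.length (cs.simple s * (w : W)) →
      Ts s (single w 1) = single ⟨cs.simple s * (w : W), h⟩ 1)
    (h0minus : ∀ (s : B) (w : E),
      cs.length (w : W) < cs.length (cs.simple s * (w : W)) →
      cs.simple s * (w : W) ∉ DJset cs J →
      Ts s (single w 1) = - (q' s) • single w 1)
    (h0plus : ∀ (s : B) (w : E),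
      cs.length (w : W) < cs.length (cs.simple s * (w : W)) →
      cs.simple s * (w : W) ∈ DJset cs J →
      cs.simple s * (w : W) ∉ E →
      Ts s (single w 1) = q s • single w 1 - (r s w).sum fun z a => a • single z 1)
    (htminus : ∀ (s : B) (w : E) (h : cs.simple s * (w : W) ∈ E),
      cs.length (cs.simple s * (w : W)) < cs.length (w : W) →
      Tst s (single w 1) = single ⟨cs.simple s * (w : W), h⟩ 1 + (q s - q' s) • single w 1)
    (htplus : ∀ (s : B) (w : E) (h : cs.simple s * (w : W) ∈ E),
      cs.length (w : W) < cs.length (cs.simple s * (w : W)) →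
      Tst s (single w 1) = single ⟨cs.simple s * (w : W), h⟩ 1)
    (ht0minus : ∀ (s : B) (w : E),
      cs.length (w : W) < cs.length (cs.simple s * (w : W)) →
      cs.simple s * (w : W) ∉ DJset cs J →
      Tst s (single w 1) = q s • single w 1)
    (hrt : ∀ (s : B) (w : E) (z : E),
      (rt s w) z = (-1 : A) ^ (cs.length (z : W) + cs.length (w : W)) * σ ((r s w) z))
    (ht0plus : ∀ (s : B) (w : E),
      cs.length (w : W) < cs.length (cs.simple s * (w : W)) →
      cs.simple s * (w : W) ∈ DJset cs J →
      cs.simple s * (w : W) ∉ E →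
      Tst s (single w 1) = - (q' s) • single w 1 + (rt s w).sum fun z a => a • single z 1)
    (s : B) (w : E) :
    signedBar σ (fun x : E => (-1 : A) ^ cs.length (x : W)) (Ts s (single w 1)) =
      -Tst s (signedBar σ (fun x : E => (-1 : A) ^ cs.length (x : W)) (single w 1)) := by
  by_cases hd : cs.IsLeftDescent (w : W) s
  · have h := simple_mul_mem_of_isLeftDescent cs hIdeal w.2 hd
    simp only [hminus s w h hd, htminus s w h hd, map_add, LinearMap.map_smulₛₗ, map_smul,
      signedBar_single_one, map_sub, hσq, hσq', neg_one_pow_length_simple_mul]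
    module
  have hlt : cs.length (w : W) < cs.length (cs.simple s * (w : W)) := by
    have := cs.not_isLeftDescent_iff.mp hd
    omega
  by_cases hE : cs.simple s * (w : W) ∈ E
  · simp only [hplus s w hE hlt, htplus s w hE hlt, map_smul, signedBar_single_one,
      neg_one_pow_length_simple_mul]
    module
  by_cases hDJ : cs.simple s * (w : W) ∈ DJset cs J
  · have hηr : signedBar σ (fun x : E => (-1 : A) ^ cs.length (x : W)) (r s w) =
        (-1 : A) ^ cs.length (w : W) • rt s w := by
      ext z
      rw [signedBar_apply, Finsupp.smul_apply, smul_eq_mul, hrt, pow_add]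
      have hsq : (-1 : A) ^ cs.length (w : W) * (-1) ^ cs.length (w : W) = 1 := by
        simp [← pow_add]
      linear_combination -(-1 : A) ^ cs.length (z : W) * σ ((r s w) z) * hsq
    have hsum (f : E →₀ A) : (f.sum fun z a => a • single z 1) = f := by
      simp only [smul_single_one, sum_single]
    rw [h0plus s w hlt hDJ hE, hsum]
    simp only [ht0plus s w hlt hDJ hE, hsum, map_sub, LinearMap.map_smulₛₗ, map_smul,
      signedBar_single_one, hσq, hηr]
    module
  · simp only [h0minus s w hlt hDJ, ht0minus s w hlt hDJ, LinearMap.map_smulₛₗ, map_smul,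
      signedBar_single_one, map_neg, hσq']
    module

theorem stmt_15_general {B W : Type*} [Group W] {CM : CoxeterMatrix B} (cs : CoxeterSystem CM W)
    (J : Set B) (E : Set W)
    (hE1 : (1 : W) ∈ E)
    (hIdeal : ∀ w ∈ E, ∀ u z : W, w = z * u →
      cs.length w = cs.length z + cs.length u → u ∈ E)
    {A : Type*} [CommRing A]
    (bar : A ≃+* A) (hbarinv : ∀ a : A, bar (bar a) = a)
    (q q' : B → A) (hbarq : ∀ s, bar (q s) = q' s)
    -- the module `M(E_J, L)`, realised on its basis `Γ_w = single w 1`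
    (Ts : B → (E →₀ A) →ₗ[A] (E →₀ A))
    (Γ : E → (E →₀ A)) (hΓ : ∀ e : E, Γ e = Finsupp.single e 1)
    (hminus : ∀ (s : B) (w : E) (h : cs.simple s * (w : W) ∈ E),
      cs.length (cs.simple s * (w : W)) < cs.length (w : W) →
      Ts s (Γ w) = Γ ⟨cs.simple s * (w : W), h⟩ + (q s - q' s) • Γ w)
    (hplus : ∀ (s : B) (w : E) (h : cs.simple s * (w : W) ∈ E),
      cs.length (w : W) < cs.length (cs.simple s * (w : W)) →
      Ts s (Γ w) = Γ ⟨cs.simple s * (w : W), h⟩)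
    (h0minus : ∀ (s : B) (w : E),
      cs.length (w : W) < cs.length (cs.simple s * (w : W)) →
      cs.simple s * (w : W) ∉ DJset cs J →
      Ts s (Γ w) = - (q' s) • Γ w)
    (r : B → E → (E →₀ A))
    (h0plus : ∀ (s : B) (w : E),
      cs.length (w : W) < cs.length (cs.simple s * (w : W)) →
      cs.simple s * (w : W) ∈ DJset cs J →
      cs.simple s * (w : W) ∉ E →
      Ts s (Γ w) = q s • Γ w - (r s w).sum fun z a => a • Γ z)
    (barM : (E →₀ A) → (E →₀ A))
    (hbarM1 : barM (Γ ⟨1, hE1⟩) = Γ ⟨1, hE1⟩)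
    (hbarMT : ∀ (s : B) (m : E →₀ A),
      barM (Ts s m) = Ts s (barM m) + (q' s - q s) • barM m)
    -- the dual module `M̃(E_J, L)`, realised on its basis `Γ̃_w = single w 1`
    (Tst : B → (E →₀ A) →ₗ[A] (E →₀ A))
    (htminus : ∀ (s : B) (w : E) (h : cs.simple s * (w : W) ∈ E),
      cs.length (cs.simple s * (w : W)) < cs.length (w : W) →
      Tst s (Γ w) = Γ ⟨cs.simple s * (w : W), h⟩ + (q s - q' s) • Γ w)
    (htplus : ∀ (s : B) (w : E) (h : cs.simple s * (w : W) ∈ E),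
      cs.length (w : W) < cs.length (cs.simple s * (w : W)) →
      Tst s (Γ w) = Γ ⟨cs.simple s * (w : W), h⟩)
    (ht0minus : ∀ (s : B) (w : E),
      cs.length (w : W) < cs.length (cs.simple s * (w : W)) →
      cs.simple s * (w : W) ∉ DJset cs J →
      Tst s (Γ w) = q s • Γ w)
    (rt : B → E → (E →₀ A))
    (hrt : ∀ (s : B) (w : E) (z : E),
      (rt s w) z =
        (-1 : A) ^ (cs.length (z : W) + cs.length (w : W)) * bar ((r s w) z))
    (ht0plus : ∀ (s : B) (w : E),
      cs.length (w : W) < cs.length (cs.simple s * (w : W)) →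
      cs.simple s * (w : W) ∈ DJset cs J →
      cs.simple s * (w : W) ∉ E →
      Tst s (Γ w) = - (q' s) • Γ w + (rt s w).sum fun z a => a • Γ z)
    (barMt : (E →₀ A) → (E →₀ A))
    (hbarMtsemi : ∀ (a : A) (m : E →₀ A), barMt (a • m) = bar a • barMt m)
    (hbarMt1 : barMt (Γ ⟨1, hE1⟩) = Γ ⟨1, hE1⟩)
    (hbarMtT : ∀ (s : B) (m : E →₀ A),
      barMt (Tst s m) = Tst s (barMt m) + (q' s - q s) • barMt m)
    -- the `R`- and `R̃`-polynomials
    (R Rt : E → E → A)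
    (hR : ∀ x y : E, R x y = (barM (Γ y)) x)
    (hRt : ∀ x y : E, Rt x y = (barMt (Γ y)) x) :
    ∀ x y : E,
      bar (R x y) =
        (-1 : A) ^ cs.length (x : W) * (-1 : A) ^ cs.length (y : W) * Rt x y := by
  obtain rfl : Γ = fun e => single e 1 := funext hΓ
  have hbarq' (s : B) : bar (q' s) = q s := by rw [← hbarq, hbarinv]
  set η := signedBar (bar : A →+* A) fun x : E => (-1 : A) ^ cs.length (x : W)
  have hηT (s : B) (m : E →₀ A) : η (Ts s m) = -Tst s (η m) := by
    refine LinearMap.congr_fun (Finsupp.basisSingleOne.ext (f₁ := η.comp (Ts s))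
      (f₂ := -(Tst s).comp η) fun w => ?_) m
    simpa using signedBar_T_single_one cs J E hIdeal hbarq hbarq' Ts Tst r rt
      hminus hplus h0minus h0plus htminus htplus ht0minus hrt ht0plus s w
  have hbarMt_neg (m : E →₀ A) : barMt (-m) = -barMt m := by
    simpa using hbarMtsemi (-1) m
  have hη_bar (w : E) : η (barM (single w 1)) = barMt (η (single w 1)) := by
    refine suffixClosed_induction cs hE1 hIdeal
      (P := fun w => η (barM (single w 1)) = barMt (η (single w 1))) ?_ (fun s w h hlt ih => ?_) w
    · simp [η, signedBar_single_one, hbarM1, hbarMt1]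
    · rw [show single ⟨_, h⟩ 1 = Ts s (single w 1) from (hplus s w h hlt).symm]
      exact map_bar_T_of_map_bar η (Ts s) (Tst s) barM barMt (by simp [hbarq, hbarq'])
        (hηT s) (hbarMT s) (hbarMtT s) hbarMt_neg ih
  intro x y
  rw [hR, hRt]
  exact apply_eq_mul_of_signedBar_eq (by simp) (fun x => by simp [← pow_add])
    hbarMtsemi (hη_bar y) x

/-- Corollary 3.2: if `R` and `R̃` are the matrices of the bar involutions of the
dual modules `M(E_J,L)` and `M̃(E_J,L)` (`Γ̄_y = Σ_x R_{x,y} Γ_x`,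
`Γ̃̄_y = Σ_x R̃_{x,y} Γ̃_x`), then `R̄_{x,y} = ε_x ε_y R̃_{x,y}`. -/
theorem stmt_15 {B W : Type*} [Group W] {CM : CoxeterMatrix B} (cs : CoxeterSystem CM W)
    (J : Set B) (E : Set W)
    (hE1 : (1 : W) ∈ E) (hEDJ : E ⊆ DJset cs J)
    (hIdeal : ∀ w ∈ E, ∀ u z : W, w = z * u →
      cs.length w = cs.length z + cs.length u → u ∈ E)
    {A : Type*} [CommRing A]
    (bar : A ≃+* A) (hbarinv : ∀ a : A, bar (bar a) = a)
    (q q' : B → A) (hq : ∀ s, q s * q' s = 1) (hbarq : ∀ s, bar (q s) = q' s)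
    -- the module `M(E_J, L)`, realised on its basis `Γ_w = single w 1`
    (Ts : B → (E →₀ A) →ₗ[A] (E →₀ A))
    (Γ : E → (E →₀ A)) (hΓ : ∀ e : E, Γ e = Finsupp.single e 1)
    (hminus : ∀ (s : B) (w : E) (h : cs.simple s * (w : W) ∈ E),
      cs.length (cs.simple s * (w : W)) < cs.length (w : W) →
      Ts s (Γ w) = Γ ⟨cs.simple s * (w : W), h⟩ + (q s - q' s) • Γ w)
    (hplus : ∀ (s : B) (w : E) (h : cs.simple s * (w : W) ∈ E),
      cs.length (w : W) < cs.length (cs.simple s * (w : W)) →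
      Ts s (Γ w) = Γ ⟨cs.simple s * (w : W), h⟩)
    (h0minus : ∀ (s : B) (w : E),
      cs.length (w : W) < cs.length (cs.simple s * (w : W)) →
      cs.simple s * (w : W) ∉ DJset cs J →
      Ts s (Γ w) = - (q' s) • Γ w)
    (r : B → E → (E →₀ A))
    (hrsupp : ∀ (s : B) (w : E) (z : E), (r s w) z ≠ 0 →
      bruhatLE cs (z : W) (w : W) ∧ (z : W) ≠ (w : W))
    (h0plus : ∀ (s : B) (w : E),
      cs.length (w : W) < cs.length (cs.simple s * (w : W)) →
      cs.simple s * (w : W) ∈ DJset cs J →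
      cs.simple s * (w : W) ∉ E →
      Ts s (Γ w) = q s • Γ w - (r s w).sum fun z a => a • Γ z)
    (barM : (E →₀ A) → (E →₀ A))
    (hbarMadd : ∀ m m' : E →₀ A, barM (m + m') = barM m + barM m')
    (hbarMsemi : ∀ (a : A) (m : E →₀ A), barM (a • m) = bar a • barM m)
    (hbarM1 : barM (Γ ⟨1, hE1⟩) = Γ ⟨1, hE1⟩)
    (hbarMT : ∀ (s : B) (m : E →₀ A),
      barM (Ts s m) = Ts s (barM m) + (q' s - q s) • barM m)
    -- the dual module `M̃(E_J, L)`, realised on its basis `Γ̃_w = single w 1`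
    (Tst : B → (E →₀ A) →ₗ[A] (E →₀ A))
    (htminus : ∀ (s : B) (w : E) (h : cs.simple s * (w : W) ∈ E),
      cs.length (cs.simple s * (w : W)) < cs.length (w : W) →
      Tst s (Γ w) = Γ ⟨cs.simple s * (w : W), h⟩ + (q s - q' s) • Γ w)
    (htplus : ∀ (s : B) (w : E) (h : cs.simple s * (w : W) ∈ E),
      cs.length (w : W) < cs.length (cs.simple s * (w : W)) →
      Tst s (Γ w) = Γ ⟨cs.simple s * (w : W), h⟩)
    (ht0minus : ∀ (s : B) (w : E),
      cs.length (w : W) < cs.length (cs.simple s * (w : W)) →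
      cs.simple s * (w : W) ∉ DJset cs J →
      Tst s (Γ w) = q s • Γ w)
    (rt : B → E → (E →₀ A))
    (hrt : ∀ (s : B) (w : E) (z : E),
      (rt s w) z =
        (-1 : A) ^ (cs.length (z : W) + cs.length (w : W)) * bar ((r s w) z))
    (ht0plus : ∀ (s : B) (w : E),
      cs.length (w : W) < cs.length (cs.simple s * (w : W)) →
      cs.simple s * (w : W) ∈ DJset cs J →
      cs.simple s * (w : W) ∉ E →
      Tst s (Γ w) = - (q' s) • Γ w + (rt s w).sum fun z a => a • Γ z)
    (barMt : (E →₀ A) → (E →₀ A))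
    (hbarMtadd : ∀ m m' : E →₀ A, barMt (m + m') = barMt m + barMt m')
    (hbarMtsemi : ∀ (a : A) (m : E →₀ A), barMt (a • m) = bar a • barMt m)
    (hbarMt1 : barMt (Γ ⟨1, hE1⟩) = Γ ⟨1, hE1⟩)
    (hbarMtT : ∀ (s : B) (m : E →₀ A),
      barMt (Tst s m) = Tst s (barMt m) + (q' s - q s) • barMt m)
    -- the `R`- and `R̃`-polynomials
    (R Rt : E → E → A)
    (hR : ∀ x y : E, R x y = (barM (Γ y)) x)
    (hRt : ∀ x y : E, Rt x y = (barMt (Γ y)) x) :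
    ∀ x y : E,
      bar (R x y) =
        (-1 : A) ^ cs.length (x : W) * (-1 : A) ^ cs.length (y : W) * Rt x y :=
  stmt_15_general cs J E hE1 hIdeal bar hbarinv q q' hbarq Ts Γ hΓ hminus hplus h0minus r h0plus
    barM hbarM1 hbarMT Tst htminus htplus ht0minus rt hrt ht0plus barMt hbarMtsemi hbarMt1 hbarMtT R
    Rt hR hRt
end

section
/- Let E be a finite poset with a length function ℓ : E → ℤ (strictly increasing along <), A a commutative ring with involution, and P, P̃, Q : E × E → A unitriangular matrices over A_{≥0} with strictly positive-degree off-diagonal entries, such that Q̄ − Q = Q̄R entrywise on strict pairs and P̃ satisfies the analogous twisted defining recursion; suppose both ε_yε_w Q_{y,w} and P̃^π_{w₀w, w₀y} satisfy the same bar-recursion with values in A_{>0} for off-diagonal entries and 1 on the diagonal. Then Q_{y,w} = ε_y ε_w P̃^π_{w₀w, w₀y} for all y ≤ w, and hence the inversion formula Σ_{z : x ≤ z ≤ w} ε_w ε_z P_{x,z} P̃^π_{w₀w, w₀z} = δ_{x,w} holds. -/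
open Classical

/-- Abstract form of Proposition 5.6 and Corollary 5.7: over a ring `A` with
involution `bar` and a subgroup `Apos` (playing the role of `A_{>0}`) in which
the only bar-fixed element is `0`, two unitriangular families satisfying the
same Kazhdan–Lusztig-type bar-recursion against a fixed `R`-matrix coincide;
here `Q` is the inverse matrix of `P` and `Pt y w` plays the role of
`P̃^π_{w₀w, w₀y}`, so `Q_{y,w} = ε_y ε_w P̃^π_{w₀w,w₀y}` and the inversion
formula `Σ_z ε_w ε_z P_{x,z} P̃^π_{w₀w,w₀z} = δ_{x,w}` follows. -/
theorem stmt_17 {E : Type*} [Fintype E] [PartialOrder E]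
    (ℓ : E → ℕ) (hℓ : ∀ x y : E, x < y → ℓ x < ℓ y)
    {A : Type*} [CommRing A]
    (bar : A ≃+* A) (hbarinv : ∀ a : A, bar (bar a) = a)
    (Apos : AddSubgroup A) (hfix : ∀ a ∈ Apos, bar a = a → a = 0)
    (R : E → E → A)
    (P Q Pt : E → E → A)
    (hPtri : ∀ y w : E, ¬ y ≤ w → P y w = 0) (hPdiag : ∀ w : E, P w w = 1)
    (hQtri : ∀ y w : E, ¬ y ≤ w → Q y w = 0) (hQdiag : ∀ w : E, Q w w = 1)
    (hPttri : ∀ y w : E, ¬ y ≤ w → Pt y w = 0) (hPtdiag : ∀ w : E, Pt w w = 1)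
    (hPpos : ∀ y w : E, y < w → P y w ∈ Apos)
    (hQpos : ∀ y w : E, y < w →
      (-1 : A) ^ ℓ y * (-1 : A) ^ ℓ w * Q y w ∈ Apos)
    (hPtpos : ∀ y w : E, y < w → Pt y w ∈ Apos)
    (hQrec : ∀ y w : E, y < w →
      bar ((-1 : A) ^ ℓ y * (-1 : A) ^ ℓ w * Q y w) -
          (-1 : A) ^ ℓ y * (-1 : A) ^ ℓ w * Q y w =
        ∑ z ∈ Finset.univ.filter (fun z : E => y < z ∧ z ≤ w),
          bar (R y z) * ((-1 : A) ^ ℓ z * (-1 : A) ^ ℓ w * Q z w))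
    (hPtrec : ∀ y w : E, y < w →
      bar (Pt y w) - Pt y w =
        ∑ z ∈ Finset.univ.filter (fun z : E => y < z ∧ z ≤ w),
          bar (R y z) * Pt z w)
    (hPQ : ∀ x w : E, ∑ z : E, P x z * Q z w = if x = w then 1 else 0) :
    (∀ y w : E, y ≤ w → Q y w = (-1 : A) ^ ℓ y * (-1 : A) ^ ℓ w * Pt y w) ∧
    (∀ x w : E,
      ∑ z : E, (-1 : A) ^ ℓ w * (-1 : A) ^ ℓ z * P x z * Pt z w =
        if x = w then 1 else 0) := by
  have hsq : ∀ n : ℕ, (-1 : A) ^ n * (-1 : A) ^ n = 1 := fun n => by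
    rw [← pow_add, ← two_mul, pow_mul]; norm_num
  have key : ∀ n : ℕ, ∀ y w : E, y ≤ w → ℓ w - ℓ y ≤ n →
      (-1 : A) ^ ℓ y * (-1 : A) ^ ℓ w * Q y w = Pt y w := by
    intro n
    induction n with
    | zero =>
      intro y w hyw _
      rcases eq_or_lt_of_le hyw with rfl | hlt
      · rw [hQdiag, hPtdiag, mul_one, hsq]
      · exact absurd (hℓ _ _ hlt) (by omega)
    | succ n ih =>
      intro y w hyw hn
      rcases eq_or_lt_of_le hyw with rfl | hlt
      · rw [hQdiag, hPtdiag, mul_one, hsq]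
      · set f := (-1 : A) ^ ℓ y * (-1 : A) ^ ℓ w * Q y w - Pt y w with hf
        have hfpos : f ∈ Apos := sub_mem (hQpos y w hlt) (hPtpos y w hlt)
        have hly := hℓ _ _ hlt
        have hbarf : bar f = f := by
          have h1 := hQrec y w hlt
          have h2 := hPtrec y w hlt
          have hz : ∀ z ∈ Finset.univ.filter (fun z : E => y < z ∧ z ≤ w),
              bar (R y z) * ((-1 : A) ^ ℓ z * (-1 : A) ^ ℓ w * Q z w) =
              bar (R y z) * Pt z w := by
            intro z hzmem
            simp only [Finset.mem_filter] at hzmem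
            obtain ⟨-, hyz, hzw⟩ := hzmem
            have hlz := hℓ _ _ hyz
            have hlw : ℓ z ≤ ℓ w := by
              rcases eq_or_lt_of_le hzw with rfl | h
              · exact le_rfl
              · exact le_of_lt (hℓ _ _ h)
            rw [ih z w hzw (by omega)]
          rw [Finset.sum_congr rfl hz, ← h2] at h1
          simp only [hf, map_sub]
          linear_combination h1
        have hf0 := hfix f hfpos hbarf
        rw [hf] at hf0
        linear_combination hf0
  have key' : ∀ y w : E, Q y w = (-1 : A) ^ ℓ y * (-1 : A) ^ ℓ w * Pt y w := by
    intro y w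
    by_cases hyw : y ≤ w
    · have h := key (ℓ w - ℓ y) y w hyw le_rfl
      calc Q y w = ((-1 : A) ^ ℓ y * (-1 : A) ^ ℓ y)
            * ((-1 : A) ^ ℓ w * (-1 : A) ^ ℓ w) * Q y w := by
              rw [hsq, hsq, one_mul, one_mul]
        _ = (-1 : A) ^ ℓ y * (-1 : A) ^ ℓ w
            * ((-1 : A) ^ ℓ y * (-1 : A) ^ ℓ w * Q y w) := by ring
        _ = (-1 : A) ^ ℓ y * (-1 : A) ^ ℓ w * Pt y w := by rw [h]
    · rw [hQtri y w hyw, hPttri y w hyw, mul_zero]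
  refine ⟨fun y w _ => key' y w, fun x w => ?_⟩
  rw [← hPQ x w]
  apply Finset.sum_congr rfl
  intro z _
  rw [key' z w]
  ring
end

section
/- Let A be a commutative ring with involution a ↦ ā such that the fixed subring of A_{>0} ∪ {0} is {0} (i.e., f̄ = f and f ∈ A_{>0} imply f = 0), and let E be a finite poset with unitriangular bar-matrix R (R̄R = 1). Then there is at most one family (P_{y,w})_{y≤w} with P_{w,w} = 1, P_{y,w} ∈ A_{>0} for y < w, satisfying P̄_{y,w} − P_{y,w} = Σ_{y < x ≤ w} R̄_{y,x} P_{x,w} for all y < w. -/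
open Classical

/-- Uniqueness part of the Kazhdan–Lusztig basis theorem, in abstract form:
over a ring `A` with involution `bar` and an additive subgroup `Apos`
(playing the role of `A_{>0}`) whose only bar-fixed element is `0`, and a
unitriangular bar-matrix `R` with `R̄R = RR̄ = 1` over a finite poset `E`,
there is at most one family `(P_{y,w})_{y ≤ w}` with `P_{w,w} = 1`,
`P_{y,w} ∈ A_{>0}` for `y < w`, satisfying
`P̄_{y,w} − P_{y,w} = Σ_{y < x ≤ w} R̄_{y,x} P_{x,w}` for all `y < w`. -/
theorem stmt_18 {E : Type*} [Fintype E] [PartialOrder E]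
    {A : Type*} [CommRing A]
    (bar : A ≃+* A) (hbarinv : ∀ a : A, bar (bar a) = a)
    (Apos : AddSubgroup A) (hfix : ∀ a ∈ Apos, bar a = a → a = 0)
    (R : E → E → A)
    (hRtri : ∀ y w : E, ¬ y ≤ w → R y w = 0) (hRdiag : ∀ w : E, R w w = 1)
    (hRR : ∀ y w : E, ∑ z : E, bar (R y z) * R z w = if y = w then 1 else 0)
    (hRR' : ∀ y w : E, ∑ z : E, R y z * bar (R z w) = if y = w then 1 else 0)
    (P P' : E → E → A)
    (hPdiag : ∀ w : E, P w w = 1) (hP'diag : ∀ w : E, P' w w = 1)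
    (hPpos : ∀ y w : E, y < w → P y w ∈ Apos)
    (hP'pos : ∀ y w : E, y < w → P' y w ∈ Apos)
    (hPrec : ∀ y w : E, y < w →
      bar (P y w) - P y w =
        ∑ x ∈ Finset.univ.filter (fun x : E => y < x ∧ x ≤ w),
          bar (R y x) * P x w)
    (hP'rec : ∀ y w : E, y < w →
      bar (P' y w) - P' y w =
        ∑ x ∈ Finset.univ.filter (fun x : E => y < x ∧ x ≤ w),
          bar (R y x) * P' x w) :
    ∀ y w : E, y ≤ w → P y w = P' y w := by
  have wf : WellFounded ((· > ·) : E → E → Prop) := wellFounded_gt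
  intro y
  induction y using wf.induction with
  | _ y ih =>
    intro w hyw
    rcases eq_or_lt_of_le hyw with rfl | hlt
    · rw [hPdiag, hP'diag]
    · have hD : ∀ x, y < x → x ≤ w → P x w = P' x w := fun x hx hxw => ih x hx w hxw
      have heq : bar (P y w) - P y w = bar (P' y w) - P' y w := by
        rw [hPrec y w hlt, hP'rec y w hlt]
        refine Finset.sum_congr rfl fun x hx => ?_
        simp only [Finset.mem_filter] at hx
        rw [hD x hx.2.1 hx.2.2]
      have key : bar (P y w - P' y w) = P y w - P' y w := by
        rw [map_sub]; linear_combination heq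
      have hmem : P y w - P' y w ∈ Apos :=
        Apos.sub_mem (hPpos y w hlt) (hP'pos y w hlt)
      exact sub_eq_zero.mp (hfix _ hmem key)
end
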